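/- Let H = (V, E) be a hypergraph with Bip H connected and fix any linear order on E. Then there is exactly one hypertree f of H with ῑ(f) = 0 (i.e., with respect to which every hyperedge is internally active), and exactly one hypertree f with ε̄(f) = 0 (every hyperedge externally active). Consequently, both the interior and the exterior polynomial of H have constant term 1. -/

import Mathlib

open SimpleGraph Finset
open scoped Classical

noncomputable section

variable {α β : Type} [DecidableEq α] [DecidableEq β]

/-- A hypergraph: a finite set `V` of vertices, a finite (index) set `E` of hyperedges,
where the hyperedge indexed by `e ∈ E` is the nonempty set `incid e ⊆ V` of its vertices.
(Indexing hyperedges by a type allows multiset multiplicities, as in the paper.) -/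
structure Hypergraph' (α β : Type) where
  V : Finset α
  E : Finset β
  incid : β → Finset α
  incid_sub : ∀ e ∈ E, incid e ⊆ V
  incid_nonempty : ∀ e ∈ E, (incid e).Nonempty

/-- The degree (valence) of a vertex in a graph. -/
def degr {W : Type} (T : SimpleGraph W) (x : W) : ℕ := (T.neighborSet x).ncard

/-- Nullity (first Betti number) of a graph: #edges − #vertices + #components. -/
def nullity {W : Type} (G : SimpleGraph W) : ℕ :=
  G.edgeSet.ncard + Nat.card G.ConnectedComponent - Nat.card W

/-- The result of transferring one unit of valence from `a` to `b`. -/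
def transferFun (f : β → ℕ) (a b : β) : β → ℕ :=
  fun x => if x = a then f a - 1 else if x = b then f b + 1 else f x

namespace Hypergraph'

variable (H : Hypergraph' α β) {T T₂ : SimpleGraph (↥H.V ⊕ ↥H.E)} {f : β → ℕ}

/-- The bipartite graph associated to a hypergraph: color classes `V` and `E`,
with `v` joined to `e` iff `v ∈ incid e`. -/
def Bip : SimpleGraph (↥H.V ⊕ ↥H.E) :=
  SimpleGraph.fromRel (fun x y =>
    ∃ (v : ↥H.V) (e : ↥H.E), x = Sum.inl v ∧ y = Sum.inr e ∧ (v : α) ∈ H.incid (e : β))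

/-- A spanning tree of the associated bipartite graph. -/
def IsSpanningTree (T : SimpleGraph (↥H.V ⊕ ↥H.E)) : Prop :=
  T ≤ H.Bip ∧ T.IsTree

/-- `T` is a spanning tree of `Bip H` realizing the vector `f` (a function on the
hyperedges, encoded as a function on `β` vanishing off `E`): `T` has degree
`f e + 1` at each hyperedge `e`. -/
def Realizes (T : SimpleGraph (↥H.V ⊕ ↥H.E)) (f : β → ℕ) : Prop :=
  H.IsSpanningTree T ∧ (∀ e, e ∉ H.E → f e = 0) ∧
    ∀ e : ↥H.E, degr T (Sum.inr e) = f (e : β) + 1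

/-- A hypertree is a vector realized by some spanning tree of `Bip H`. -/
def IsHypertree (f : β → ℕ) : Prop := ∃ T, H.Realizes T f

/-- The bipartite graph `Bip H |_{E'}` induced by a subset `E'` of hyperedges:
color classes `∪E'` and `E'`. -/
def BipOn (E' : Finset β) : SimpleGraph (↥(E'.biUnion H.incid) ⊕ ↥E') :=
  SimpleGraph.fromRel (fun x y =>
    ∃ (v : ↥(E'.biUnion H.incid)) (e : ↥E'),
      x = Sum.inl v ∧ y = Sum.inr e ∧ (v : α) ∈ H.incid (e : β))

/-- `c(E')`: the number of connected components of `Bip H |_{E'}`. -/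
def compCount (E' : Finset β) : ℕ := Nat.card (H.BipOn E').ConnectedComponent

/-- `μ(E') = |∪E'| − c(E')` (and `μ(∅) = 0`). -/
def mu (E' : Finset β) : ℤ :=
  ((E'.biUnion H.incid).card : ℤ) - (H.compCount E' : ℤ)

/-- `f` is such that a transfer of valence is possible from `a` to `b`. -/
def TransferPossible (f : β → ℕ) (a b : β) : Prop :=
  0 < f a ∧ H.IsHypertree (transferFun f a b)

/-- `e` is internally active w.r.t. the hypertree `f` and the order `o`. -/
def InternallyActive (o : LinearOrder β) (f : β → ℕ) (e : β) : Prop :=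
  ∀ x ∈ H.E, o.lt x e → ¬ H.TransferPossible f e x

/-- `e` is externally active w.r.t. the hypertree `f` and the order `o`. -/
def ExternallyActive (o : LinearOrder β) (f : β → ℕ) (e : β) : Prop :=
  ∀ x ∈ H.E, o.lt x e → ¬ H.TransferPossible f x e

/-- `ῑ(f)`: the number of internally inactive hyperedges w.r.t. `f`. -/
def intInact (o : LinearOrder β) (f : β → ℕ) : ℕ :=
  (H.E.filter (fun e => ¬ H.InternallyActive o f e)).card

/-- `ε̄(f)`: the number of externally inactive hyperedges w.r.t. `f`. -/
def extInact (o : LinearOrder β) (f : β → ℕ) : ℕ :=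
  (H.E.filter (fun e => ¬ H.ExternallyActive o f e)).card

end Hypergraph'

end

/-!
Hypertrees inherit an exchange property from symmetric exchange of spanning trees of `Bip H`:
if `u x < v x`, then for some hyperedge `b ≠ x` a transfer of valence `b → x` is possible at `u`
and a transfer `x → b` at `v`. If `u` and `v` both have every hyperedge internally active, then
`b < x` makes `x` inactive for `v` and `x < b` makes `b` inactive for `u`; so `u = v`, and
likewise for external activity. For existence, order hypertrees lexicographically with smaller
hyperedges more significant: a transfer to a smaller hyperedge increases the order, one from a
smaller hyperedge decreases it, so the maximum is fully internally active and the minimum fully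
externally active.
-/

variable {α β : Type}

namespace SimpleGraph

variable {W : Type} {G T T' : SimpleGraph W}

lemma degr_eq_ncard_incidenceSet (G : SimpleGraph W) (y : W) :
    degr G y = (G.incidenceSet y).ncard :=
  (Nat.card_congr (G.incidenceSetEquivNeighborSet y)).symm

lemma edgeSet_deleteEdges_sup_edge (e : Sym2 W) {u v : W} (huv : u ≠ v) :
    (G.deleteEdges {e} ⊔ edge u v).edgeSet = insert s(u, v) (G.edgeSet \ {e}) := by
  rw [edgeSet_sup, edgeSet_deleteEdges, edgeSet_edge_of_ne huv, Set.union_singleton]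

variable [Finite W]

lemma isTree_of_isAcyclic_of_card (hG : G.IsAcyclic)
    (hcard : Nat.card G.edgeSet + 1 = Nat.card W) : G.IsTree := by
  have : Nonempty W := (Nat.card_pos_iff.mp (by omega : 0 < Nat.card W)).1
  obtain ⟨T, hGT, -, hT⟩ := connected_top.exists_isTree_le_of_le_of_isAcyclic le_top hG
  have hTcard := (isTree_iff_connected_and_card.mp hT).2
  have : G.edgeSet = T.edgeSet := Set.eq_of_subset_of_ncard_le (edgeSet_mono hGT)
    (show Nat.card T.edgeSet ≤ Nat.card G.edgeSet by omega)
  rwa [edgeSet_inj.mp this]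

lemma IsTree.deleteEdges_sup_edge (hT : T.IsTree) {c d u v : W} (hcd : T.Adj c d)
    (huv : ¬ (T.deleteEdges {s(c, d)}).Reachable u v) :
    (T.deleteEdges {s(c, d)} ⊔ edge u v).IsTree := by
  have hne : u ≠ v := by rintro rfl; exact huv .rfl
  have hnew : s(u, v) ∉ T.edgeSet \ {s(c, d)} := fun h =>
    huv (Adj.reachable (by rwa [← mem_edgeSet, edgeSet_deleteEdges]))
  refine isTree_of_isAcyclic_of_card
    ((hT.isAcyclic.anti (deleteEdges_le _)).sup_edge_of_not_reachable huv) ?_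
  rw [Nat.card_coe_set_eq, edgeSet_deleteEdges_sup_edge _ hne, Set.ncard_insert_of_notMem hnew,
    Set.ncard_sdiff_singleton_add_one (T.mem_edgeSet.mpr hcd), ← Nat.card_coe_set_eq,
    (isTree_iff_connected_and_card.mp hT).2]

lemma degr_deleteEdges_sup_edge (G : SimpleGraph W) {c d u v : W} (hcd : G.Adj c d)
    (huv : ¬ G.Adj u v) (hne : u ≠ v) (y : W) :
    degr (G.deleteEdges {s(c, d)} ⊔ edge u v) y + (if y ∈ s(c, d) then 1 else 0) =
      degr G y + (if y ∈ s(u, v) then 1 else 0) := by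
  simp only [degr_eq_ncard_incidenceSet, incidenceSet, edgeSet_deleteEdges_sup_edge _ hne]
  set A := {e ∈ G.edgeSet | y ∈ e}
  have hold : (A \ {s(c, d)}).ncard + (if y ∈ s(c, d) then 1 else 0) = A.ncard := by
    split_ifs with h
    · exact Set.ncard_sdiff_singleton_add_one ⟨hcd, h⟩
    · rw [Set.sdiff_singleton_eq_self (fun h' => h h'.2), add_zero]
  have hnew : {e ∈ insert s(u, v) (G.edgeSet \ {s(c, d)}) | y ∈ e}.ncard =
      (A \ {s(c, d)}).ncard + (if y ∈ s(u, v) then 1 else 0) := by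
    split_ifs with h
    on_goal 1 => rw [← Set.ncard_insert_of_notMem (a := s(u, v)) (fun h' => huv h'.1.1)]
    all_goals
      congr 1
      ext e
      simp only [A, Set.mem_sep_iff, Set.mem_insert_iff, Set.mem_sdiff]
      grind
  omega

lemma ncard_edgeSet_sdiff_lt {c d u v : W} (hcd : G.Adj c d) (hcdT : ¬ T.Adj c d)
    (huv : T.Adj u v) :
    ((G.deleteEdges {s(c, d)} ⊔ edge u v).edgeSet \ T.edgeSet).ncard <
      (G.edgeSet \ T.edgeSet).ncard := by
  refine (Set.ncard_le_ncard (t := (G.edgeSet \ T.edgeSet) \ {s(c, d)}) ?_).trans_lt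
    (Set.ncard_sdiff_singleton_lt_of_mem ⟨hcd, hcdT⟩)
  rw [edgeSet_sup, edgeSet_deleteEdges]
  rintro e ⟨he | he, heT⟩
  · exact ⟨⟨he.1, heT⟩, he.2⟩
  · exact absurd (edgeSet_edge_subset he ▸ huv) heT

theorem IsTree.exists_symm_exchange (hT : T.IsTree) (hT' : T'.IsTree) {X w : W}
    (hXw : T'.Adj X w) (hXwT : ¬ T.Adj X w) :
    ∃ a b, T.Adj a b ∧ ¬ T'.Adj a b ∧ (T.deleteEdges {s(a, b)} ⊔ edge X w).IsTree ∧
      (T'.deleteEdges {s(X, w)} ⊔ edge a b).IsTree := by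
  -- `ab` is where the `T`-path from `X` to `w` leaves the component of `X` in `T' - Xw`.
  set C := {z | (T'.deleteEdges {s(X, w)}).Reachable X z}
  have hwC : w ∉ C := isAcyclic_iff_forall_adj_isBridge.mp hT'.isAcyclic hXw
  obtain ⟨p, hp⟩ := hT.connected.exists_isPath X w
  obtain ⟨⟨⟨a, b⟩, hab⟩, hd, haC, hbC⟩ := p.exists_boundary_dart C .rfl hwC
  have hcut : ¬ (T'.deleteEdges {s(X, w)}).Reachable a b := fun h => hbC (haC.trans h)
  have hne : s(a, b) ≠ s(X, w) := fun h => hXwT (by rw [← mem_edgeSet, ← h]; exact hab)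
  have hsep : ¬ (T.deleteEdges {s(a, b)}).Reachable X w := by
    rw [reachable_deleteEdges_iff_exists_walk]
    rintro ⟨q, hq⟩
    classical
    have hpq : p = q.bypass := congrArg Subtype.val
      ((hT.isAcyclic.subsingleton_path X w).elim ⟨p, hp⟩ ⟨q.bypass, q.bypass_isPath⟩)
    refine hq (q.edges_bypass_subset_edges ?_)
    rw [← hpq, p.edges_eq_map_darts]
    exact List.mem_map_of_mem hd
  refine ⟨a, b, hab, fun h => hcut (Adj.reachable ?_), hT.deleteEdges_sup_edge hab hsep,
    hT'.deleteEdges_sup_edge hXw hcut⟩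
  rw [deleteEdges_adj]
  exact ⟨h, hne⟩

end SimpleGraph

lemma ExistsUnique.ncard_setOf_eq_one {γ : Type*} {p : γ → Prop} (h : ∃! x, p x) :
    {x | p x}.ncard = 1 := by
  obtain ⟨a, ha, huniq⟩ := h
  exact Set.ncard_eq_one.mpr ⟨a, Set.eq_singleton_iff_unique_mem.mpr ⟨ha, huniq⟩⟩

namespace Hypergraph'

variable (H : Hypergraph' α β) {T T₂ : SimpleGraph (↥H.V ⊕ ↥H.E)} {f : β → ℕ}

lemma exists_inr_mem_iff_of_bip_adj {p q : ↥H.V ⊕ ↥H.E} (h : H.Bip.Adj p q) :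
    ∃ e : ↥H.E, ∀ e' : ↥H.E, Sum.inr e' ∈ s(p, q) ↔ e' = e := by
  rw [Bip, fromRel_adj] at h
  obtain ⟨-, ⟨v, e, rfl, rfl, -⟩ | ⟨v, e, rfl, rfl, -⟩⟩ := h
  all_goals exact ⟨e, fun e' => by simp⟩

lemma one_le_degr_inr (hT : H.IsSpanningTree T) (e : ↥H.E) :
    1 ≤ degr T (Sum.inr e) := by
  obtain ⟨a, ha⟩ := H.incid_nonempty e e.2
  have hreach := hT.2.connected.preconnected (Sum.inr e) (Sum.inl ⟨a, H.incid_sub e e.2 ha⟩)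
  exact (Set.ncard_pos).mpr (hreach.nonempty_neighborSet_left (by simp))

noncomputable def hypertreeOf (T : SimpleGraph (↥H.V ⊕ ↥H.E)) (e : β) : ℕ :=
  if he : e ∈ H.E then degr T (Sum.inr ⟨e, he⟩) - 1 else 0

variable {H} in
lemma Realizes.eq_hypertreeOf (hT : H.Realizes T f) : f = H.hypertreeOf T := by
  funext e
  by_cases he : e ∈ H.E
  · simp [hypertreeOf, he, hT.2.2 ⟨e, he⟩]
  · simp [hypertreeOf, he, hT.2.1 e he]

lemma realizes_hypertreeOf (hT : H.IsSpanningTree T) :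
    H.Realizes T (H.hypertreeOf T) :=
  ⟨hT, fun e he => dif_neg he, fun e => by
    simp only [hypertreeOf, e.2, dite_true, Subtype.coe_eta]
    have := H.one_le_degr_inr hT e
    omega⟩

lemma exists_isHypertree (hconn : H.Bip.Connected) : ∃ f, H.IsHypertree f := by
  obtain ⟨T, hTB, hT⟩ := hconn.exists_isTree_le
  exact ⟨_, T, H.realizes_hypertreeOf ⟨hTB, hT⟩⟩

lemma finite_setOf_isHypertree : {f | H.IsHypertree f}.Finite :=
  (Set.finite_range H.hypertreeOf).subset fun _ ⟨_, hT⟩ => ⟨_, hT.eq_hypertreeOf.symm⟩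

lemma mem_of_lt {u v : β → ℕ} (hu : H.IsHypertree u) (hv : H.IsHypertree v) {x : β}
    (hx : u x < v x) : x ∈ H.E := by
  obtain ⟨T, hT⟩ := hu
  obtain ⟨T', hT'⟩ := hv
  by_contra h
  simp [hT.2.1 x h, hT'.2.1 x h] at hx

variable {H}

lemma Realizes.of_degr_eq (hT : H.Realizes T f) (hT₂ : H.IsSpanningTree T₂)
    (hdeg : ∀ e : ↥H.E, degr T₂ (Sum.inr e) = degr T (Sum.inr e)) : H.Realizes T₂ f :=
  ⟨hT₂, hT.2.1, fun e => (hdeg e).trans (hT.2.2 e)⟩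

variable [DecidableEq β]

lemma Realizes.transferPossible (hT : H.Realizes T f) (hT₂ : H.IsSpanningTree T₂) {x y : β}
    (hx : x ∈ H.E) (hy : y ∈ H.E) (hyx : y ≠ x)
    (hdeg : ∀ e : ↥H.E, degr T₂ (Sum.inr e) + (if (e : β) = y then 1 else 0) =
      degr T (Sum.inr e) + (if (e : β) = x then 1 else 0)) :
    H.TransferPossible f y x := by
  have hpos : 0 < f y := by
    have hdy := hdeg ⟨y, hy⟩
    have hfy : degr T (Sum.inr ⟨y, hy⟩) = f y + 1 := hT.2.2 ⟨y, hy⟩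
    have := H.one_le_degr_inr hT₂ ⟨y, hy⟩
    simp only [↓reduceIte, hyx, add_zero] at hdy
    omega
  refine ⟨hpos, T₂, hT₂, fun e he => ?_, fun ⟨e, he⟩ => ?_⟩
  · simp [transferFun, hT.2.1 e he, show e ≠ y by rintro rfl; exact he hy,
      show e ≠ x by rintro rfl; exact he hx]
  · have hde := hdeg ⟨e, he⟩
    have hfe : degr T (Sum.inr ⟨e, he⟩) = f e + 1 := hT.2.2 ⟨e, he⟩
    simp only [transferFun]
    grind

variable (H)

theorem exists_transferPossible_pair {u v : β → ℕ} (hu : H.IsHypertree u)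
    (hv : H.IsHypertree v) {x : β} (hx : u x < v x) :
    ∃ b ∈ H.E, b ≠ x ∧ H.TransferPossible u b x ∧ H.TransferPossible v x b := by
  have hxE := H.mem_of_lt hu hv hx
  obtain ⟨T', hT'⟩ := hv
  obtain ⟨T, hT⟩ := hu
  set X : ↥H.V ⊕ ↥H.E := Sum.inr ⟨x, hxE⟩
  induction hn : (T.edgeSet \ T'.edgeSet).ncard using Nat.strong_induction_on generalizing T with
  | _ n ih =>
  obtain ⟨w, hXw', hXw⟩ : ∃ w, T'.Adj X w ∧ ¬ T.Adj X w := by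
    refine Set.exists_mem_notMem_of_ncard_lt_ncard (show degr T X < degr T' X from ?_)
    have hdT : degr T X = u x + 1 := hT.2.2 _
    have hdT' : degr T' X = v x + 1 := hT'.2.2 _
    omega
  obtain ⟨a, b, hab, hab', htree, htree'⟩ := hT.1.2.exists_symm_exchange hT'.1.2 hXw' hXw
  obtain ⟨y, hy⟩ := H.exists_inr_mem_iff_of_bip_adj (hT.1.1 hab)
  obtain ⟨x', hx'⟩ := H.exists_inr_mem_iff_of_bip_adj (hT'.1.1 hXw')
  obtain rfl : x' = ⟨x, hxE⟩ := ((hx' _).mp (Sym2.mem_mk_left _ _)).symm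
  have hsp : H.IsSpanningTree (T.deleteEdges {s(a, b)} ⊔ edge X w) :=
    ⟨sup_le ((deleteEdges_le _).trans hT.1.1) (H.Bip.edge_le_iff.mpr (.inr (hT'.1.1 hXw'))),
      htree⟩
  have hsp' : H.IsSpanningTree (T'.deleteEdges {s(X, w)} ⊔ edge a b) :=
    ⟨sup_le ((deleteEdges_le _).trans hT'.1.1) (H.Bip.edge_le_iff.mpr (.inr (hT.1.1 hab))),
      htree'⟩
  have hdeg (e : ↥H.E) := degr_deleteEdges_sup_edge T hab hXw hXw'.ne (.inr e)
  have hdeg' (e : ↥H.E) := degr_deleteEdges_sup_edge T' hXw' hab' hab.ne (.inr e)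
  simp only [hy, hx', Subtype.ext_iff] at hdeg hdeg'
  by_cases hyx : (y : β) = x
  -- the edge leaving `T` is also at `x`: same degrees, but `T` moved closer to `T'`
  · simp only [hyx, add_left_inj] at hdeg
    exact ih _ (hn ▸ ncard_edgeSet_sdiff_lt hab hab' hXw') _ (hT.of_degr_eq hsp hdeg) rfl
  · exact ⟨y, y.2, hyx, hT.transferPossible hsp hxE y.2 hyx hdeg,
      hT'.transferPossible hsp' y.2 hxE (Ne.symm hyx) hdeg'⟩

variable (o : LinearOrder β)

lemma intInact_eq_zero_iff {f : β → ℕ} :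
    H.intInact o f = 0 ↔ ∀ e ∈ H.E, H.InternallyActive o f e := by
  simp [intInact, Finset.filter_eq_empty_iff]

lemma extInact_eq_zero_iff {f : β → ℕ} :
    H.extInact o f = 0 ↔ ∀ e ∈ H.E, H.ExternallyActive o f e := by
  simp [extInact, Finset.filter_eq_empty_iff]

theorem exists_forall_internallyActive (hconn : H.Bip.Connected) :
    ∃ f, H.IsHypertree f ∧ ∀ e ∈ H.E, H.InternallyActive o f e := by
  let _ := o
  obtain ⟨f, hf, hmax⟩ := Set.exists_max_image _ (fun f => toLex fun e : ↥H.E => f e)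
    H.finite_setOf_isHypertree (H.exists_isHypertree hconn)
  refine ⟨f, hf, fun e _ x hx hxe ⟨_, hg⟩ =>
    (hmax _ hg).not_gt ⟨⟨x, hx⟩, fun j (hj : (j : β) < x) => ?_, ?_⟩⟩
  · simp [transferFun, (hj.trans hxe).ne, hj.ne]
  · simp [transferFun, hxe.ne]

theorem exists_forall_externallyActive (hconn : H.Bip.Connected) :
    ∃ f, H.IsHypertree f ∧ ∀ e ∈ H.E, H.ExternallyActive o f e := by
  let _ := o
  obtain ⟨f, hf, hmin⟩ := Set.exists_min_image _ (fun f => toLex fun e : ↥H.E => f e)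
    H.finite_setOf_isHypertree (H.exists_isHypertree hconn)
  refine ⟨f, hf, fun e _ x hx hxe ⟨hpos, hg⟩ =>
    (hmin _ hg).not_gt ⟨⟨x, hx⟩, fun j (hj : (j : β) < x) => ?_, ?_⟩⟩
  · simp [transferFun, (hj.trans hxe).ne, hj.ne]
  · simpa [transferFun] using Nat.sub_one_lt_of_lt hpos

variable {H o} {u v : β → ℕ}

lemma not_lt_of_forall_internallyActive (hu : H.IsHypertree u) (hv : H.IsHypertree v)
    (hua : ∀ e ∈ H.E, H.InternallyActive o u e) (hva : ∀ e ∈ H.E, H.InternallyActive o v e)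
    (x : β) : ¬ u x < v x := fun hx => by
  let _ := o
  obtain ⟨b, hb, hbx, hub, hvb⟩ := H.exists_transferPossible_pair hu hv hx
  have hxE := H.mem_of_lt hu hv hx
  rcases hbx.lt_or_gt with hbx | hxb
  · exact hva x hxE b hb hbx hvb
  · exact hua b hb x hxE hxb hub

lemma not_lt_of_forall_externallyActive (hu : H.IsHypertree u) (hv : H.IsHypertree v)
    (hua : ∀ e ∈ H.E, H.ExternallyActive o u e) (hva : ∀ e ∈ H.E, H.ExternallyActive o v e)
    (x : β) : ¬ u x < v x := fun hx => by
  let _ := o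
  obtain ⟨b, hb, hbx, hub, hvb⟩ := H.exists_transferPossible_pair hu hv hx
  have hxE := H.mem_of_lt hu hv hx
  rcases hbx.lt_or_gt with hbx | hxb
  · exact hua x hxE b hb hbx hub
  · exact hva b hb x hxE hxb hvb

variable (H o)

theorem existsUnique_forall_internallyActive (hconn : H.Bip.Connected) :
    ∃! f, H.IsHypertree f ∧ ∀ e ∈ H.E, H.InternallyActive o f e := by
  obtain ⟨f, hf, hfa⟩ := H.exists_forall_internallyActive o hconn
  refine ⟨f, ⟨hf, hfa⟩, fun g ⟨hg, hga⟩ => funext fun x => le_antisymm ?_ ?_⟩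
  · exact not_lt.mp (not_lt_of_forall_internallyActive hf hg hfa hga x)
  · exact not_lt.mp (not_lt_of_forall_internallyActive hg hf hga hfa x)

theorem existsUnique_forall_externallyActive (hconn : H.Bip.Connected) :
    ∃! f, H.IsHypertree f ∧ ∀ e ∈ H.E, H.ExternallyActive o f e := by
  obtain ⟨f, hf, hfa⟩ := H.exists_forall_externallyActive o hconn
  refine ⟨f, ⟨hf, hfa⟩, fun g ⟨hg, hga⟩ => funext fun x => le_antisymm ?_ ?_⟩
  · exact not_lt.mp (not_lt_of_forall_externallyActive hf hg hfa hga x)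
  · exact not_lt.mp (not_lt_of_forall_externallyActive hg hf hga hfa x)

end Hypergraph'

variable [DecidableEq α] [DecidableEq β]

/-- for any order there is a unique hypertree with respect to which
every hyperedge is internally active, and a unique one with every hyperedge externally
active; hence both polynomials have constant term `1`. -/
theorem unique_fully_active (H : Hypergraph' α β) (hconn : H.Bip.Connected)
    (o : LinearOrder β) :
    (∃! f : β → ℕ, H.IsHypertree f ∧ H.intInact o f = 0) ∧
    (∃! f : β → ℕ, H.IsHypertree f ∧ H.extInact o f = 0) ∧
    {f : β → ℕ | H.IsHypertree f ∧ H.intInact o f = 0}.ncard = 1 ∧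
    {f : β → ℕ | H.IsHypertree f ∧ H.extInact o f = 0}.ncard = 1 := by
  have hint : ∃! f : β → ℕ, H.IsHypertree f ∧ H.intInact o f = 0 := by
    simpa only [H.intInact_eq_zero_iff] using H.existsUnique_forall_internallyActive o hconn
  have hext : ∃! f : β → ℕ, H.IsHypertree f ∧ H.extInact o f = 0 := by
    simpa only [H.extInact_eq_zero_iff] using H.existsUnique_forall_externallyActive o hconn
  exact ⟨hint, hext, hint.ncard_setOf_eq_one, hext.ncard_setOf_eq_one⟩
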